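/- arXiv:2411.06699 — 3 statements merged into one kernel-verified Lean document; each statement's English description precedes it below -/
import Mathlib

section
/- Let n and t be positive integers with n ≥ 5t+1, and let g(x) = x^3 - (n+t-4)x^2 - (2nt+3n-5t^2+t-5)x + nt^2 - 2nt - 2n + 5t^2 - 2t^3 + 2. Then g(n + (3/2)t - 1) < 0. -/
theorem stmt_0 (n t : ℕ) (ht : 1 ≤ t) (hn : 5*t + 1 ≤ n) (g : ℝ → ℝ)
    (hg : ∀ x : ℝ, g x = x^3 - ((n:ℝ) + t - 4)*x^2
      - (2*(n:ℝ)*t + 3*n - 5*(t:ℝ)^2 + t - 5)*x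
      + (n:ℝ)*t^2 - 2*n*t - 2*n + 5*(t:ℝ)^2 - 2*(t:ℝ)^3 + 2) :
    g ((n:ℝ) + (3/2)*t - 1) < 0 := by
  have ht' : (1:ℝ) ≤ (t:ℝ) := by exact_mod_cast ht
  have hn' : 5*(t:ℝ) + 1 ≤ (n:ℝ) := by exact_mod_cast hn
  rw [hg]
  have key : ∀ s u : ℝ, 0 ≤ s → 0 ≤ u →
      (s + 5*u + 6 + (3/2)*(u+1) - 1)^3
      - ((s + 5*u + 6) + (u+1) - 4)*(s + 5*u + 6 + (3/2)*(u+1) - 1)^2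
      - (2*(s + 5*u + 6)*(u+1) + 3*(s + 5*u + 6) - 5*(u+1)^2 + (u+1) - 5)
          *(s + 5*u + 6 + (3/2)*(u+1) - 1)
      + (s + 5*u + 6)*(u+1)^2 - 2*(s + 5*u + 6)*(u+1) - 2*(s + 5*u + 6)
      + 5*(u+1)^2 - 2*(u+1)^3 + 2 < 0 := by
    intro s u hs0 hu0
    nlinarith [mul_nonneg hs0 hu0, mul_nonneg (mul_nonneg hs0 hu0) hu0,
      mul_nonneg (mul_nonneg hs0 hs0) hu0, mul_nonneg hs0 hs0, mul_nonneg hu0 hu0,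
      mul_nonneg (mul_nonneg hu0 hu0) hu0]
  have h := key ((n:ℝ) - (5*t+1)) ((t:ℝ) - 1) (by linarith) (by linarith)
  have e1 : ((n:ℝ) - (5*t+1)) + 5*((t:ℝ) - 1) + 6 = (n:ℝ) := by ring
  have e2 : ((t:ℝ) - 1) + 1 = (t:ℝ) := by ring
  rw [e1, e2] at h
  linarith [h]
end

section
/- Let n and t be positive integers with n ≥ 9t+3, and let h(x) = x^3 - (5n+t-8)x^2 + (8n^2 - nt - 26n + 8t^2 - 4t + 20)x - 4n^3 + 2n^2 t + 20n^2 - 8nt^2 - 2nt - 32n - 2t^3 + 18t^2 - 4t + 16. Then h(2n + 5t - 2) < 0. -/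
theorem stmt_1 (n t : ℕ) (ht : 1 ≤ t) (hn : 9*t + 3 ≤ n) (h : ℝ → ℝ)
    (hh : ∀ x : ℝ, h x = x^3 - (5*(n:ℝ) + t - 8)*x^2
      + (8*(n:ℝ)^2 - n*t - 26*n + 8*(t:ℝ)^2 - 4*t + 20)*x
      - 4*(n:ℝ)^3 + 2*(n:ℝ)^2*t + 20*(n:ℝ)^2 - 8*(n:ℝ)*t^2 - 2*(n:ℝ)*t
      - 32*n - 2*(t:ℝ)^3 + 18*(t:ℝ)^2 - 4*t + 16) :
    h (2*(n:ℝ) + 5*t - 2) < 0 := by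
  have hb : (1:ℝ) ≤ (t:ℝ) := by exact_mod_cast ht
  have ha : 9*(t:ℝ) + 3 ≤ (n:ℝ) := by exact_mod_cast hn
  rw [hh]
  have hm : (0:ℝ) ≤ (n:ℝ) - 9*t - 3 := by linarith
  have hs : (0:ℝ) ≤ (t:ℝ) - 1 := by linarith
  nlinarith [mul_nonneg hm hs, mul_nonneg (mul_nonneg hm hs) hs,
    mul_nonneg (mul_nonneg hm hm) hs, mul_nonneg hm hm, mul_nonneg hs hs,
    mul_nonneg (mul_nonneg hs hs) hs]
end

section
/- Let n and t be positive integers with n ≥ 9t+3, and let h(x) = x^3 - (5n+t-8)x^2 + (8n^2 - nt - 26n + 8t^2 - 4t + 20)x - 4n^3 + 2n^2 t + 20n^2 - 8nt^2 - 2nt - 32n - 2t^3 + 18t^2 - 4t + 16. Then for every real x ≥ 3n - 3t - 5, h(x) > 0. -/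
theorem stmt_2 (n t : ℕ) (ht : 1 ≤ t) (hn : 9*t + 3 ≤ n) (h : ℝ → ℝ)
    (hh : ∀ x : ℝ, h x = x^3 - (5*(n:ℝ) + t - 8)*x^2
      + (8*(n:ℝ)^2 - n*t - 26*n + 8*(t:ℝ)^2 - 4*t + 20)*x
      - 4*(n:ℝ)^3 + 2*(n:ℝ)^2*t + 20*(n:ℝ)^2 - 8*(n:ℝ)*t^2 - 2*(n:ℝ)*t
      - 32*n - 2*(t:ℝ)^3 + 18*(t:ℝ)^2 - 4*t + 16) :
    ∀ x : ℝ, 3*(n:ℝ) - 3*t - 5 ≤ x → h x > 0 := by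
  intro x hx
  have ht' : (1:ℝ) ≤ (t:ℝ) := by exact_mod_cast ht
  have hn' : 9*(t:ℝ) + 3 ≤ (n:ℝ) := by exact_mod_cast hn
  set s : ℝ := x - (3*(n:ℝ) - 3*t - 5) with hsdef
  set m : ℝ := (n:ℝ) - 9*t - 3 with hmdef
  have hs0 : 0 ≤ s := by simp only [hsdef]; linarith
  have hm0 : 0 ≤ m := by simp only [hmdef]; linarith
  have key : h x = s^3 + (4*m+26*(t:ℝ)+5)*s^2
      + (5*m^2+59*m*(t:ℝ)+12*m+167*(t:ℝ)^2+63*(t:ℝ)+6)*s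
      + (2*m^3+29*m^2*(t:ℝ)+7*m^2+109*m*(t:ℝ)^2+51*m*(t:ℝ)+6*m+28*(t:ℝ)^3+8*(t:ℝ)^2) := by
    rw [hh x, hsdef, hmdef]; ring
  have h1 : 0 ≤ s^3 := pow_nonneg hs0 3
  have h2 : 0 ≤ (4*m+26*(t:ℝ)+5)*s^2 :=
    mul_nonneg (by linarith) (sq_nonneg s)
  have h3 : 0 ≤ (5*m^2+59*m*(t:ℝ)+12*m+167*(t:ℝ)^2+63*(t:ℝ)+6)*s := by
    apply mul_nonneg _ hs0
    have := sq_nonneg m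
    have := mul_nonneg hm0 (by linarith : (0:ℝ) ≤ (t:ℝ))
    nlinarith [sq_nonneg (t:ℝ)]
  have h4 : 0 < 2*m^3+29*m^2*(t:ℝ)+7*m^2+109*m*(t:ℝ)^2+51*m*(t:ℝ)+6*m+28*(t:ℝ)^3+8*(t:ℝ)^2 := by
    have ht0 : (0:ℝ) ≤ (t:ℝ) := by linarith
    have a1 : 0 ≤ m^3 := pow_nonneg hm0 3
    have a2 : 0 ≤ m^2*(t:ℝ) := mul_nonneg (sq_nonneg m) ht0
    have a3 : 0 ≤ m*(t:ℝ)^2 := mul_nonneg hm0 (sq_nonneg _)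
    have a4 : 0 ≤ m*(t:ℝ) := mul_nonneg hm0 ht0
    have a5 : (1:ℝ) ≤ (t:ℝ)^3 := by nlinarith [ht']
    nlinarith [sq_nonneg m, sq_nonneg (t:ℝ)]
  linarith [key, h1, h2, h3, h4]
end
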